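/- arXiv:1811.01456 — 2 statements merged into one kernel-verified Lean document; each statement's English description precedes it below -/
import Mathlib

section
/- If A is an algebra in a congruence-modular variety, then the lattice of compatible superequivalences on A is modular. -/
open Set

variable {α : Type*}

/-- The identity relation (as defined in the older Mathlib). -/
def idRel : Set (α × α) :=
  { p : α × α | p.1 = p.2 }

/-- Composition of relations (as defined in the older Mathlib). -/
def compRel (r₁ r₂ : Set (α × α)) : Set (α × α) :=
  { p : α × α | ∃ z : α, (p.1, z) ∈ r₁ ∧ (z, p.2) ∈ r₂ }

/-- An ideal in the lattice of binary relations on a set: nonempty, downward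
closed, and closed under finite unions (= finite joins). -/
def IsIdeal (ℐ : Set (Set (α × α))) : Prop :=
  ℐ.Nonempty ∧ (∀ R ∈ ℐ, ∀ T ⊆ R, T ∈ ℐ) ∧ (∀ R ∈ ℐ, ∀ S ∈ ℐ, R ∪ S ∈ ℐ)

/-- A superequivalence: an ideal of relations containing the diagonal, closed
under relational opposites, and closed under composition of relations. -/
def IsSuperEq (ℐ : Set (Set (α × α))) : Prop :=
  IsIdeal ℐ ∧ idRel ∈ ℐ ∧ (∀ R ∈ ℐ, Prod.swap ⁻¹' R ∈ ℐ) ∧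
    (∀ R ∈ ℐ, ∀ S ∈ ℐ, compRel R S ∈ ℐ)

/-- Composition of ideals of relations: the ideal generated by the compositions
`R ○ S` of members (this generating family is directed, so the generated ideal
is its downward closure). -/
def idealComp (ℐ 𝒥 : Set (Set (α × α))) : Set (Set (α × α)) :=
  {T | ∃ R ∈ ℐ, ∃ S ∈ 𝒥, T ⊆ compRel R S}

/-- Composition of a nonempty list of relations. -/
def listComp : List (Set (α × α)) → Set (α × α)
  | [] => idRel
  | [R] => R
  | R :: S :: l => compRel R (listComp (S :: l))

/-- The ideal of relations generated by a set `G` of relations: everything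
below a finite union of members of `G`. -/
def idealGen (G : Set (Set (α × α))) : Set (Set (α × α)) :=
  {T | ∃ s : Finset (Set (α × α)), ↑s ⊆ G ∧ T ⊆ ⋃₀ ↑s}

/-- The set of finite (nonempty) compositions of relations from `X`. -/
def comps (X : Set (Set (α × α))) : Set (Set (α × α)) :=
  {T | ∃ l : List (Set (α × α)), l ≠ [] ∧ (∀ R ∈ l, R ∈ X) ∧ T = listComp l}

/-- The join of two superequivalences: the ideal generated by all finite
compositions of relations from their union. -/
def seJoin (ℐ 𝒥 : Set (Set (α × α))) : Set (Set (α × α)) :=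
  idealGen (comps (ℐ ∪ 𝒥))

/-- The join of a family of superequivalences. -/
def seSup (S : Set (Set (Set (α × α)))) : Set (Set (α × α)) :=
  idealGen (comps (⋃₀ S))

variable {A : Type*} {ι : Type*} {ar : ι → ℕ}

/-- Terms over a signature (operation symbols `ι` with arities `ar`) in `n` variables. -/
inductive Term (ι : Type*) (ar : ι → ℕ) (n : ℕ) : Type _ where
  | var : Fin n → Term ι ar n
  | app : (i : ι) → (Fin (ar i) → Term ι ar n) → Term ι ar n

/-- Evaluation of a term in an algebra `A` with operations `ops`. -/
def Term.eval {A : Type*} {ι : Type*} {ar : ι → ℕ} {n : ℕ}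
    (ops : ∀ i, (Fin (ar i) → A) → A) (v : Fin n → A) : Term ι ar n → A
  | Term.var k => v k
  | Term.app i ts => ops i fun j => Term.eval ops v (ts j)

/-- Componentwise image of a tuple of relations under an `n`-ary operation. -/
def opImg {A : Type*} {n : ℕ} (w : (Fin n → A) → A) (R : Fin n → Set (A × A)) :
    Set (A × A) :=
  {p | ∃ a b : Fin n → A, (∀ k, (a k, b k) ∈ R k) ∧ p = (w a, w b)}

/-- A set (ideal) of relations on the algebra `A` is compatible if it is closed
under componentwise images of the basic operations. -/
def seCompatible (ops : ∀ i, (Fin (ar i) → A) → A) (ℐ : Set (Set (A × A))) : Prop :=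
  ∀ i, ∀ R : Fin (ar i) → Set (A × A), (∀ k, R k ∈ ℐ) → opImg (ops i) R ∈ ℐ

/-- `m 0, …, m d` is a sequence of Day terms for the algebra `(A, ops)`. -/
def DayTerms (ops : ∀ i, (Fin (ar i) → A) → A) (m : ℕ → Term ι ar 4) (d : ℕ) : Prop :=
  (∀ i ≤ d, ∀ x y : A, (m i).eval ops ![x, y, y, x] = x) ∧
  (∀ x y z w : A, (m 0).eval ops ![x, y, z, w] = x) ∧
  (∀ x y z w : A, (m d).eval ops ![x, y, z, w] = w) ∧
  (∀ i < d, Even i → ∀ x y : A,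
    (m i).eval ops ![x, x, y, y] = (m (i + 1)).eval ops ![x, x, y, y]) ∧
  (∀ i < d, Odd i → ∀ x y z : A,
    (m i).eval ops ![x, y, y, z] = (m (i + 1)).eval ops ![x, y, y, z])

/-!
Only `seJoin x y ∩ z ⊆ seJoin x (y ∩ z)` needs work. A member of the left side lies below finitely
many relations `T ∩ (R₁ ○ ⋯ ○ Rₖ)` with `T ∈ z` and letters `Rᵢ ∈ x ∪ y`, and each of these lies in
`seJoin x (y ∩ z)` by induction on `k`. A leading `x`-letter `R` is split off, replacing `T` by
`R⁻¹ ○ T ∈ z`. A `y`-letter `R` followed by a composite `B ∈ x` is cut down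
to `R ∩ (T ○ B⁻¹) ∈ y ∩ z`. Otherwise the word has the shape `S ○ W ○ S₂ ○ W'` with `S, S₂ ∈ y`,
and Day's argument applies: for `(c, e) ∈ T` with `c S p W b S₂ q W' e`, the elements
`mⱼ(c, b, b, e)` and `mⱼ(c, c, e, e)` are linked through `mⱼ(c, p, b, e)`, `mⱼ(c, c, b, e)` and
`mⱼ(c, c, q, e)` by a word one letter shorter, since the images of `S⁻¹` and `S₂` merge into one
`y`-letter; because `mⱼ(u, v, v, u) = u` they are also linked through `c` by a relation of `z`
built from `T`. The Day identities then chain `c = m₀(c, b, b, e)` to `m_d(c, b, b, e) = e`.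
-/

open scoped SetRel

section Relations

variable {β γ : Type*}

def relComp (l : List (SetRel α α)) : SetRel α α := l.foldr (· ○ ·) SetRel.id

@[simp] lemma relComp_nil : relComp ([] : List (SetRel α α)) = SetRel.id := rfl

@[simp] lemma relComp_cons (R : SetRel α α) (l : List (SetRel α α)) :
    relComp (R :: l) = R ○ relComp l := rfl

@[simp] lemma relComp_append (l₁ l₂ : List (SetRel α α)) :
    relComp (l₁ ++ l₂) = relComp l₁ ○ relComp l₂ := by
  induction l₁ with
  | nil => simp
  | cons R l ih => simp [ih, SetRel.comp_assoc]

lemma inv_relComp (l : List (SetRel α α)) :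
    (relComp l).inv = relComp (l.reverse.map SetRel.inv) := by
  induction l with
  | nil => exact SetRel.inv_id
  | cons R l ih => simp [ih]

lemma listComp_eq_relComp : ∀ l : List (SetRel α α), listComp l = relComp l
  | [] => rfl
  | [R] => (SetRel.comp_id R).symm
  | R :: S :: l => congrArg (R ○ ·) (listComp_eq_relComp (S :: l))

lemma mk_mem_relComp_replicate {E : SetRel α α} (f : ℕ → α) {n : ℕ}
    (h : ∀ i < n, (f i, f (i + 1)) ∈ E) : (f 0, f n) ∈ relComp (List.replicate n E) := by
  induction n with
  | zero => rfl
  | succ n ih =>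
    rw [List.replicate_succ', relComp_append]
    exact ⟨f n, ih fun i hi => h i (by omega), f (n + 1), h n (by omega), rfl⟩

lemma map_mem_relComp_map (F : α → β) (G : SetRel α α → SetRel β β)
    (hG : ∀ Q u v, (u, v) ∈ Q → (F u, F v) ∈ G Q) :
    ∀ {l : List (SetRel α α)} {u v : α}, (u, v) ∈ relComp l →
      (F u, F v) ∈ relComp (l.map G)
  | [], _, _, rfl => rfl
  | Q :: _, _, _, ⟨w, huw, hwv⟩ => ⟨F w, hG Q _ _ huw, map_mem_relComp_map F G hG hwv⟩

lemma inter_comp_subset_comp_inter {T : SetRel α γ} {R : SetRel α β} {W : SetRel β γ} :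
    T ∩ (R ○ W) ⊆ R ○ ((R.inv ○ T) ∩ W) := by
  rintro ⟨a, c⟩ ⟨hac, b, hab, hbc⟩
  exact ⟨b, hab, ⟨a, hab, hac⟩, hbc⟩

lemma inter_comp_subset_inter_comp {T : SetRel α γ} {R : SetRel α β} {B : SetRel β γ} :
    T ∩ (R ○ B) ⊆ (R ∩ (T ○ B.inv)) ○ B := by
  rintro ⟨a, c⟩ ⟨hac, b, hab, hbc⟩
  exact ⟨b, ⟨hab, c, hac, hbc⟩, hbc⟩

end Relations

section Superequivalences

variable {β : Type*} {ℐ : Set (SetRel α α)} {R S T : SetRel α α}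

lemma IsIdeal.mem_of_subset (h : IsIdeal ℐ) (hR : R ∈ ℐ) (hT : T ⊆ R) : T ∈ ℐ :=
  h.2.1 R hR T hT

lemma IsIdeal.union_mem (h : IsIdeal ℐ) (hR : R ∈ ℐ) (hS : S ∈ ℐ) : R ∪ S ∈ ℐ :=
  h.2.2 R hR S hS

lemma IsIdeal.finset_sup_mem (h : IsIdeal ℐ) {s : Finset β} {f : β → SetRel α α}
    (hf : ∀ i ∈ s, f i ∈ ℐ) : s.sup f ∈ ℐ := by
  obtain ⟨R, hR⟩ := h.1
  exact Finset.sup_induction (h.mem_of_subset hR (empty_subset R))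
    (fun _ h₁ _ h₂ => h.union_mem h₁ h₂) hf

lemma IsSuperEq.id_mem (h : IsSuperEq ℐ) : SetRel.id ∈ ℐ := h.2.1

lemma IsSuperEq.inv_mem (h : IsSuperEq ℐ) (hR : R ∈ ℐ) : R.inv ∈ ℐ := h.2.2.1 R hR

lemma IsSuperEq.comp_mem (h : IsSuperEq ℐ) (hR : R ∈ ℐ) (hS : S ∈ ℐ) : R ○ S ∈ ℐ :=
  h.2.2.2 R hR S hS

lemma IsSuperEq.relComp_mem (h : IsSuperEq ℐ) :
    ∀ {l : List (SetRel α α)}, (∀ R ∈ l, R ∈ ℐ) → relComp l ∈ ℐ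
  | [], _ => h.id_mem
  | R :: _, hl => h.comp_mem (hl R (by simp)) (h.relComp_mem fun Q hQ => hl Q (by simp [hQ]))

end Superequivalences

section Join

variable {X Y w : Set (SetRel α α)}

lemma comp_mem_comps {R S : SetRel α α} (hR : R ∈ comps X) (hS : S ∈ comps X) :
    R ○ S ∈ comps X := by
  obtain ⟨l₁, hl₁, hX₁, rfl⟩ := hR
  obtain ⟨l₂, -, hX₂, rfl⟩ := hS
  refine ⟨l₁ ++ l₂, by simp [hl₁], fun R hR => ?_, ?_⟩
  · exact (List.mem_append.1 hR).elim (hX₁ R) (hX₂ R)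
  · simp only [listComp_eq_relComp, relComp_append]

lemma inv_mem_comps (hX : ∀ R ∈ X, R.inv ∈ X) {R : SetRel α α} (hR : R ∈ comps X) :
    R.inv ∈ comps X := by
  obtain ⟨l, hl, hlX, rfl⟩ := hR
  refine ⟨l.reverse.map SetRel.inv, by simpa using hl, ?_, ?_⟩
  · simp only [List.mem_map, List.mem_reverse]
    rintro _ ⟨Q, hQ, rfl⟩
    exact hX Q (hlX Q hQ)
  · simp only [listComp_eq_relComp, inv_relComp]

lemma mem_comps_of_mem {R : SetRel α α} (hR : R ∈ X) : R ∈ comps X :=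
  ⟨[R], by simp, by simpa using hR, rfl⟩

lemma subset_idealGen (G : Set (SetRel α α)) : G ⊆ idealGen G :=
  fun C hC => ⟨{C}, by simpa using hC, by simp⟩

lemma subset_idealGen_comps (X : Set (SetRel α α)) : X ⊆ idealGen (comps X) :=
  fun _ hR => subset_idealGen _ (mem_comps_of_mem hR)

lemma idealGen_mono {G H : Set (SetRel α α)} (h : G ⊆ H) : idealGen G ⊆ idealGen H :=
  fun _ ⟨s, hsG, hTs⟩ => ⟨s, hsG.trans h, hTs⟩

lemma comps_mono (h : X ⊆ Y) : comps X ⊆ comps Y :=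
  fun _ ⟨l, hl, hlX, hT⟩ => ⟨l, hl, fun R hR => h (hlX R hR), hT⟩

theorem isSuperEq_idealGen_comps (hid : SetRel.id ∈ X) (hX : ∀ R ∈ X, R.inv ∈ X) :
    IsSuperEq (idealGen (comps X)) := by
  classical
  refine ⟨⟨⟨∅, ∅, by simp, by simp⟩, ?_, ?_⟩, subset_idealGen_comps X hid, ?_, ?_⟩
  · rintro R ⟨s, hs, hRs⟩ T hTR
    exact ⟨s, hs, hTR.trans hRs⟩
  · rintro R ⟨s, hs, hRs⟩ S ⟨t, ht, hSt⟩
    refine ⟨s ∪ t, by simpa using ⟨hs, ht⟩, ?_⟩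
    rw [Finset.coe_union, sUnion_union]
    exact union_subset_union hRs hSt
  · rintro R ⟨s, hs, hRs⟩
    refine ⟨s.image SetRel.inv, ?_, ?_⟩
    · rw [Finset.coe_image, image_subset_iff]
      exact fun C hC => inv_mem_comps hX (hs hC)
    · rintro ⟨a, b⟩ hab
      obtain ⟨C, hC, habC⟩ := hRs hab
      exact ⟨SetRel.inv C, Finset.mem_image_of_mem _ hC, habC⟩
  · rintro R ⟨s, hs, hRs⟩ S ⟨t, ht, hSt⟩
    refine ⟨(s ×ˢ t).image fun C => C.1 ○ C.2, ?_, ?_⟩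
    · simp only [Finset.coe_image, Finset.coe_product, image_subset_iff]
      rintro ⟨C, D⟩ ⟨hC, hD⟩
      exact comp_mem_comps (hs hC) (ht hD)
    · rintro ⟨a, c⟩ ⟨b, hab, hbc⟩
      obtain ⟨C, hC, habC⟩ := hRs hab
      obtain ⟨D, hD, hbcD⟩ := hSt hbc
      exact ⟨C ○ D, Finset.mem_image.2 ⟨(C, D), Finset.mem_product.2 ⟨hC, hD⟩, rfl⟩,
        b, habC, hbcD⟩

lemma IsSuperEq.inter (hx : IsSuperEq X) (hy : IsSuperEq Y) : IsSuperEq (X ∩ Y) :=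
  ⟨⟨⟨_, hx.id_mem, hy.id_mem⟩,
      fun _ hR _ hT => ⟨hx.1.mem_of_subset hR.1 hT, hy.1.mem_of_subset hR.2 hT⟩,
      fun _ hR _ hS => ⟨hx.1.union_mem hR.1 hS.1, hy.1.union_mem hR.2 hS.2⟩⟩,
    ⟨hx.id_mem, hy.id_mem⟩, fun _ hR => ⟨hx.inv_mem hR.1, hy.inv_mem hR.2⟩,
    fun _ hR _ hS => ⟨hx.comp_mem hR.1 hS.1, hy.comp_mem hR.2 hS.2⟩⟩

lemma IsSuperEq.seJoin (hx : IsSuperEq X) (hy : IsSuperEq Y) : IsSuperEq (seJoin X Y) :=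
  isSuperEq_idealGen_comps (Or.inl hx.id_mem) fun _ hR => hR.imp hx.inv_mem hy.inv_mem

lemma IsSuperEq.idealGen_comps_subset (hw : IsSuperEq w) (hX : X ⊆ w) :
    idealGen (comps X) ⊆ w := by
  rintro T ⟨s, hs, hTs⟩
  refine hw.1.mem_of_subset (hw.1.finset_sup_mem (s := s) (f := id) fun C hC => ?_) ?_
  · obtain ⟨l, -, hlX, rfl⟩ := hs hC
    rw [listComp_eq_relComp]
    exact hw.relComp_mem fun R hR => hX (hlX R hR)
  · rwa [Finset.sup_id_set_eq_sUnion]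

end Join

section Terms

variable (ops : ∀ i, (Fin (ar i) → A) → A)

def termImg {n : ℕ} (t : Term ι ar n) (P : Fin n → SetRel A A) : SetRel A A :=
  opImg (fun v => t.eval ops v) P

variable {ops}

lemma mk_mem_termImg {n : ℕ} (t : Term ι ar n) {P : Fin n → SetRel A A} {a b : Fin n → A}
    (h : ∀ k, (a k, b k) ∈ P k) : (t.eval ops a, t.eval ops b) ∈ termImg ops t P :=
  ⟨a, b, h, rfl⟩

lemma IsSuperEq.termImg_mem {w : Set (SetRel A A)} (hw : IsSuperEq w)
    (hwc : seCompatible ops w) {n : ℕ} (t : Term ι ar n) {P : Fin n → SetRel A A}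
    (hP : ∀ k, P k ∈ w) : termImg ops t P ∈ w := by
  induction t with
  | var k =>
    refine hw.1.mem_of_subset (hP k) ?_
    rintro _ ⟨a, b, hab, rfl⟩
    exact hab k
  | app i ts ih =>
    refine hw.1.mem_of_subset (hwc i _ ih) ?_
    rintro _ ⟨a, b, hab, rfl⟩
    exact ⟨_, _, fun j => mk_mem_termImg (ts j) hab, rfl⟩

end Terms

section Day

variable {ops : ∀ i, (Fin (ar i) → A) → A}

lemma mk_mem_termImg_four (t : Term ι ar 4) {P₀ P₁ P₂ P₃ : SetRel A A}
    {a₀ a₁ a₂ a₃ b₀ b₁ b₂ b₃ : A} (h₀ : (a₀, b₀) ∈ P₀) (h₁ : (a₁, b₁) ∈ P₁)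
    (h₂ : (a₂, b₂) ∈ P₂) (h₃ : (a₃, b₃) ∈ P₃) :
    (t.eval ops ![a₀, a₁, a₂, a₃], t.eval ops ![b₀, b₁, b₂, b₃]) ∈
      termImg ops t ![P₀, P₁, P₂, P₃] :=
  mk_mem_termImg t fun k => by fin_cases k <;> assumption

lemma IsSuperEq.termImg_four_mem {w : Set (SetRel A A)} (hw : IsSuperEq w)
    (hwc : seCompatible ops w) (t : Term ι ar 4) {P₀ P₁ P₂ P₃ : SetRel A A}
    (h₀ : P₀ ∈ w) (h₁ : P₁ ∈ w) (h₂ : P₂ ∈ w) (h₃ : P₃ ∈ w) :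
    termImg ops t ![P₀, P₁, P₂, P₃] ∈ w :=
  hw.termImg_mem hwc t fun k => by fin_cases k <;> assumption

variable (ops) in
def dayWord (t : Term ι ar 4) (S S₂ : SetRel A A) (xs rest : List (SetRel A A)) :
    List (SetRel A A) :=
  (xs.reverse.map SetRel.inv).map (fun Q => termImg ops t ![.id, Q, .id, .id]) ++
    (termImg ops t ![.id, S.inv, .id, .id] ○ termImg ops t ![.id, .id, S₂, .id]) ::
      rest.map fun Q => termImg ops t ![.id, .id, Q, .id]

variable (ops) in
def dayCert (t : Term ι ar 4) (T : SetRel A A) : SetRel A A :=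
  termImg ops t ![.id, .id, .id, T.inv] ○ termImg ops t ![.id, .id, T, T]

variable {t : Term ι ar 4} {S S₂ T : SetRel A A} {xs rest : List (SetRel A A)}

lemma length_dayWord : (dayWord ops t S S₂ xs rest).length = xs.length + 1 + rest.length := by
  simp [dayWord]
  omega

lemma forall_mem_dayWord {x y : Set (SetRel A A)} (hx : IsSuperEq x) (hxc : seCompatible ops x)
    (hy : IsSuperEq y) (hyc : seCompatible ops y) (hS : S ∈ y) (hS₂ : S₂ ∈ y)
    (hxs : ∀ R ∈ xs, R ∈ x ∪ y) (hrest : ∀ R ∈ rest, R ∈ x ∪ y) :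
    ∀ R ∈ dayWord ops t S S₂ xs rest, R ∈ x ∪ y := by
  simp only [dayWord, List.mem_append, List.mem_cons, List.mem_map, List.mem_reverse]
  rintro _ ((⟨_, ⟨Q, hQ, rfl⟩, rfl⟩) | rfl | ⟨Q, hQ, rfl⟩)
  · exact (hxs Q hQ).imp
      (fun h => hx.termImg_four_mem hxc t hx.id_mem (hx.inv_mem h) hx.id_mem hx.id_mem)
      (fun h => hy.termImg_four_mem hyc t hy.id_mem (hy.inv_mem h) hy.id_mem hy.id_mem)
  · exact Or.inr (hy.comp_mem
      (hy.termImg_four_mem hyc t hy.id_mem (hy.inv_mem hS) hy.id_mem hy.id_mem)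
      (hy.termImg_four_mem hyc t hy.id_mem hy.id_mem hS₂ hy.id_mem))
  · exact (hrest Q hQ).imp
      (fun h => hx.termImg_four_mem hxc t hx.id_mem hx.id_mem h hx.id_mem)
      (fun h => hy.termImg_four_mem hyc t hy.id_mem hy.id_mem h hy.id_mem)

lemma dayCert_mem {z : Set (SetRel A A)} (hz : IsSuperEq z) (hzc : seCompatible ops z)
    (hT : T ∈ z) : dayCert ops t T ∈ z :=
  hz.comp_mem (hz.termImg_four_mem hzc t hz.id_mem hz.id_mem hz.id_mem (hz.inv_mem hT))
    (hz.termImg_four_mem hzc t hz.id_mem hz.id_mem hT hT)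

lemma mk_mem_relComp_dayWord {c p b q e : A} (hcp : (c, p) ∈ S) (hpb : (p, b) ∈ relComp xs)
    (hbq : (b, q) ∈ S₂) (hqe : (q, e) ∈ relComp rest) :
    (t.eval ops ![c, b, b, e], t.eval ops ![c, c, e, e]) ∈
      relComp (dayWord ops t S S₂ xs rest) := by
  rw [dayWord, relComp_append, relComp_cons]
  refine ⟨t.eval ops ![c, p, b, e], ?_, t.eval ops ![c, c, q, e],
    ⟨t.eval ops ![c, c, b, e], ?_, ?_⟩, ?_⟩
  · have hbp : (b, p) ∈ relComp (xs.reverse.map SetRel.inv) := inv_relComp xs ▸ hpb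
    exact map_mem_relComp_map (fun s => t.eval ops ![c, s, b, e])
      (fun Q => termImg ops t ![.id, Q, .id, .id])
      (fun _ _ _ h => mk_mem_termImg_four t rfl h rfl rfl) hbp
  · exact mk_mem_termImg_four t rfl hcp rfl rfl
  · exact mk_mem_termImg_four t rfl rfl hbq rfl
  · exact map_mem_relComp_map (fun s => t.eval ops ![c, c, s, e])
      (fun Q => termImg ops t ![.id, .id, Q, .id])
      (fun _ _ _ h => mk_mem_termImg_four t rfl rfl h rfl) hqe

lemma mk_mem_dayCert (ht : ∀ u v : A, t.eval ops ![u, v, v, u] = u) {c e : A} (b : A)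
    (hce : (c, e) ∈ T) :
    (t.eval ops ![c, b, b, e], t.eval ops ![c, c, e, e]) ∈ dayCert ops t T := by
  have h₁ : (t.eval ops ![c, b, b, e], t.eval ops ![c, b, b, c]) ∈
      termImg ops t ![.id, .id, .id, T.inv] := mk_mem_termImg_four t rfl rfl rfl hce
  have h₂ : (t.eval ops ![c, c, c, c], t.eval ops ![c, c, e, e]) ∈
      termImg ops t ![.id, .id, T, T] := mk_mem_termImg_four t rfl rfl hce hce
  rw [ht] at h₁ h₂
  exact ⟨c, h₁, h₂⟩

end Day

section Modularity

variable {ops : ∀ i, (Fin (ar i) → A) → A} {m : ℕ → Term ι ar 4} {d : ℕ}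
  {x y z : Set (SetRel A A)}

lemma DayTerms.mk_mem_relComp_replicate (hday : DayTerms ops m d) {E : SetRel A A} {a b c : A}
    (hE : ∀ j ≤ d, ((m j).eval ops ![a, b, b, c], (m j).eval ops ![a, a, c, c]) ∈ E) :
    (a, c) ∈ relComp (List.replicate d (E ○ E.inv)) := by
  have h := _root_.mk_mem_relComp_replicate (E := E ○ E.inv) (n := d)
    (fun j => (m j).eval ops ![a, b, b, c]) fun i hi => ?_
  · rwa [hday.2.1, hday.2.2.1] at h
  rcases Nat.even_or_odd i with hi' | hi'
  · refine ⟨_, hE i hi.le, ?_⟩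
    rw [SetRel.mem_inv, hday.2.2.2.1 i hi hi' a c]
    exact hE (i + 1) hi
  · rw [← hday.2.2.2.2 i hi hi' a b c]
    exact ⟨_, hE i hi.le, hE i hi.le⟩

lemma inter_relComp_mem_of_dayTerms (hday : DayTerms ops m d)
    (hx : IsSuperEq x) (hxc : seCompatible ops x) (hy : IsSuperEq y) (hyc : seCompatible ops y)
    (hz : IsSuperEq z) (hzc : seCompatible ops z) {J : Set (SetRel A A)} (hJ : IsSuperEq J)
    {S S₂ : SetRel A A} {xs rest : List (SetRel A A)} (hS : S ∈ y) (hS₂ : S₂ ∈ y)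
    (hxs : ∀ R ∈ xs, R ∈ x ∪ y) (hrest : ∀ R ∈ rest, R ∈ x ∪ y)
    (ih : ∀ l : List (SetRel A A), l.length = xs.length + 1 + rest.length →
      (∀ R ∈ l, R ∈ x ∪ y) → ∀ T ∈ z, T ∩ relComp l ∈ J)
    {T : SetRel A A} (hT : T ∈ z) : T ∩ relComp (S :: (xs ++ S₂ :: rest)) ∈ J := by
  set ε : ℕ → SetRel A A := fun j =>
    dayCert ops (m j) T ∩ relComp (dayWord ops (m j) S S₂ xs rest)
  have hε : ∀ j, ε j ∈ J := fun j => ih _ length_dayWord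
    (forall_mem_dayWord hx hxc hy hyc hS hS₂ hxs hrest) _ (dayCert_mem hz hzc hT)
  set E := (Finset.range (d + 1)).sup ε
  have hE : E ∈ J := hJ.1.finset_sup_mem fun j _ => hε j
  refine hJ.1.mem_of_subset
    (hJ.relComp_mem (l := List.replicate d (E ○ E.inv)) fun R hR => ?_) ?_
  · rw [List.eq_of_mem_replicate hR]
    exact hJ.comp_mem hE (hJ.inv_mem hE)
  rintro ⟨a, e⟩ ⟨hae, hl⟩
  rw [relComp_cons, relComp_append, relComp_cons] at hl
  obtain ⟨p, hap, b, hpb, q, hbq, hqe⟩ := hl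
  exact hday.mk_mem_relComp_replicate fun j hj =>
    Finset.le_sup (f := ε) (Finset.mem_range_succ_iff.2 hj)
      ⟨mk_mem_dayCert (hday.1 j hj) b hae, mk_mem_relComp_dayWord hap hpb hbq hqe⟩

theorem inter_relComp_mem (hday : DayTerms ops m d)
    (hx : IsSuperEq x) (hxc : seCompatible ops x) (hy : IsSuperEq y) (hyc : seCompatible ops y)
    (hz : IsSuperEq z) (hzc : seCompatible ops z) (hxz : x ⊆ z)
    {J : Set (SetRel A A)} (hJ : IsSuperEq J) (hxJ : x ⊆ J) (hyzJ : y ∩ z ⊆ J) :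
    ∀ l : List (SetRel A A), (∀ R ∈ l, R ∈ x ∪ y) → ∀ T ∈ z, T ∩ relComp l ∈ J
  | [], _, _, _ => hJ.1.mem_of_subset hJ.id_mem inter_subset_right
  | R :: l, hl, T, hT => by
    have hl' : ∀ Q ∈ l, Q ∈ x ∪ y := fun Q hQ => hl Q (List.mem_cons_of_mem R hQ)
    rcases hl R List.mem_cons_self with hRx | hRy
    · have hT' := hz.comp_mem (hz.inv_mem (hxz hRx)) hT
      have hlT' := inter_relComp_mem hday hx hxc hy hyc hz hzc hxz hJ hxJ hyzJ l hl' _ hT'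
      exact hJ.1.mem_of_subset (hJ.comp_mem (hxJ hRx) hlT') inter_comp_subset_comp_inter
    by_cases hlx : ∀ Q ∈ l, Q ∈ x
    · have hB := hx.relComp_mem hlx
      have hRyz : R ∩ (T ○ (relComp l).inv) ∈ y ∩ z :=
        ⟨hy.1.mem_of_subset hRy inter_subset_left,
          hz.1.mem_of_subset (hz.comp_mem hT (hz.inv_mem (hxz hB))) inter_subset_right⟩
      exact hJ.1.mem_of_subset (hJ.comp_mem (hyzJ hRyz) (hxJ hB)) inter_comp_subset_inter_comp
    push Not at hlx
    obtain ⟨S₂, hS₂l, hS₂x⟩ := hlx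
    obtain ⟨xs, rest, rfl⟩ := List.append_of_mem hS₂l
    exact inter_relComp_mem_of_dayTerms hday hx hxc hy hyc hz hzc hJ hRy
      ((hl' S₂ hS₂l).resolve_left hS₂x) (fun Q hQ => hl' Q (by simp [hQ]))
      (fun Q hQ => hl' Q (by simp [hQ]))
      (fun l' _ => inter_relComp_mem hday hx hxc hy hyc hz hzc hxz hJ hxJ hyzJ l') hT
termination_by l => l.length
decreasing_by all_goals simp_all <;> omega

end Modularity

theorem stmt15 (ops : ∀ i, (Fin (ar i) → A) → A) (m : ℕ → Term ι ar 4) (d : ℕ)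
    (hday : DayTerms ops m d)
    (x y z : Set (Set (A × A)))
    (hx : IsSuperEq x) (hxc : seCompatible ops x)
    (hy : IsSuperEq y) (hyc : seCompatible ops y)
    (hz : IsSuperEq z) (hzc : seCompatible ops z)
    (hxz : x ⊆ z) :
    seJoin x (y ∩ z) = seJoin x y ∩ z := by
  have hJ := hx.seJoin (hy.inter hz)
  refine Subset.antisymm (subset_inter ?_ ?_) ?_
  · exact idealGen_mono (comps_mono (union_subset_union_right x inter_subset_left))
  · exact hz.idealGen_comps_subset (union_subset hxz inter_subset_right)
  rintro T ⟨⟨s, hs, hTs⟩, hT⟩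
  refine hJ.1.mem_of_subset (hJ.1.finset_sup_mem (s := s) (f := (T ∩ ·)) fun C hC => ?_) ?_
  · obtain ⟨l, -, hl, rfl⟩ := hs hC
    rw [listComp_eq_relComp]
    exact inter_relComp_mem hday hx hxc hy hyc hz hzc hxz hJ
      (subset_union_left.trans (subset_idealGen_comps _))
      (subset_union_right.trans (subset_idealGen_comps _)) l hl T hT
  · intro p hp
    obtain ⟨C, hC, hpC⟩ := hTs hp
    exact Finset.le_sup (f := (T ∩ ·)) hC ⟨hp, hpC⟩
end

section
/- Let A be an algebra with a Mal'tsev term p. Then any two compatible superuniformities on A permute, and consequently the lattice of compatible superuniformities on A is modular. -/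
open Filter Set

variable {α : Type*}

/-- Composition of filters of relations: the filter generated by compositions
of members. -/
def fComp (F G : Filter (α × α)) : Filter (α × α) :=
  F.lift fun U => G.lift' fun V => SetRel.comp U V

/-- An ideal in the lattice of filters of relations (filters carry the
reverse-inclusion order, which is Mathlib's order on `Filter`): nonempty,
downward closed, and closed under finite joins. -/
def IsFilIdeal (ℰ : Set (Filter (α × α))) : Prop :=
  ℰ.Nonempty ∧ (∀ F ∈ ℰ, ∀ G ≤ F, G ∈ ℰ) ∧ (∀ F ∈ ℰ, ∀ G ∈ ℰ, F ⊔ G ∈ ℰ)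

/-- A superuniformity: an ideal of filters of relations containing the
principal filter on the diagonal, closed under opposites of filters, and
closed under composition of filters. -/
def IsSuperUnif (ℰ : Set (Filter (α × α))) : Prop :=
  IsFilIdeal ℰ ∧ 𝓟 (SetRel.id : SetRel α α) ∈ ℰ ∧ (∀ F ∈ ℰ, Filter.map Prod.swap F ∈ ℰ) ∧
    (∀ F ∈ ℰ, ∀ G ∈ ℰ, fComp F G ∈ ℰ)

/-- Composition of ideals of filters: the ideal generated by the filter
compositions of members (a directed family, hence the downward closure). -/
def filIdealComp (ℰ ℰ' : Set (Filter (α × α))) : Set (Filter (α × α)) :=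
  {H | ∃ F ∈ ℰ, ∃ G ∈ ℰ', H ≤ fComp F G}

/-- Composition of a nonempty list of filters of relations. -/
def filListComp : List (Filter (α × α)) → Filter (α × α)
  | [] => 𝓟 (SetRel.id : SetRel α α)
  | [F] => F
  | F :: G :: l => fComp F (filListComp (G :: l))

/-- The set of finite (nonempty) compositions of filters from `X`. -/
def filComps (X : Set (Filter (α × α))) : Set (Filter (α × α)) :=
  {H | ∃ l : List (Filter (α × α)), l ≠ [] ∧ (∀ F ∈ l, F ∈ X) ∧ H = filListComp l}

/-- The ideal of filters generated by a set `G` of filters: everything below a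
finite join of members. -/
def filIdealGen (G : Set (Filter (α × α))) : Set (Filter (α × α)) :=
  {H | ∃ s : Finset (Filter (α × α)), ↑s ⊆ G ∧ H ≤ s.sup id}

/-- The join of two superuniformities: the ideal generated by all finite
compositions of filters from their union. -/
def suJoin (ℰ ℰ' : Set (Filter (α × α))) : Set (Filter (α × α)) :=
  filIdealGen (filComps (ℰ ∪ ℰ'))

/-- The join of a family of superuniformities. -/
def suSup (S : Set (Set (Filter (α × α)))) : Set (Filter (α × α)) :=
  filIdealGen (filComps (⋃₀ S))

variable {A : Type*} {ι : Type*} {ar : ι → ℕ}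

/-- The filter generated by the componentwise images of tuples of members of
filters under an `n`-ary operation. -/
def opFilter {A : Type*} {n : ℕ} (w : (Fin n → A) → A) (F : Fin n → Filter (A × A)) :
    Filter (A × A) :=
  Filter.generate {T | ∃ S : Fin n → Set (A × A), (∀ k, S k ∈ F k) ∧ T = opImg w S}

/-- A set (ideal) of filters of relations on the algebra `(A, ops)` is
compatible if it is closed under the componentwise image filters of the basic
operations. -/
def suCompatible (ops : ∀ i, (Fin (ar i) → A) → A) (ℰ : Set (Filter (A × A))) : Prop :=
  ∀ i, ∀ F : Fin (ar i) → Filter (A × A), (∀ k, F k ∈ ℰ) → opFilter (ops i) F ∈ ℰ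

/-
The Mal'tsev term `p` gives `x = p(x, y, y)` and `p(x, x, z) = z`, so whenever `x F y` and
`y G z` the element `p(x, y, z)` links `x` to `z` first by `p(Δ, Δ, G)` and then by
`p(Δ, F⁻¹, Δ)`, with `Δ` the diagonal: `F ∘ G ≤ p(Δ, Δ, G) ∘ p(Δ, F⁻¹, Δ)`, and compatibility
puts these two filters in `ℰ'` and `ℰ`.
For permuting superuniformities `ℰ, ℰ'` the join is just `ℰ ∘ ℰ'`, and modularity reduces to
Dedekind's law for relations: if `H ≤ F ∘ G` then `H ≤ F ∘ (G ⊓ F⁻¹ ∘ H)`.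
-/

open SetRel

lemma mem_fComp {F G : Filter (α × α)} {s : Set (α × α)} :
    s ∈ fComp F G ↔ ∃ U ∈ F, ∃ V ∈ G, U ○ V ⊆ s := by
  have hmono : Monotone fun U : Set (α × α) => G.lift' fun V => U ○ V :=
    fun _ _ h => lift'_mono' fun _ _ => comp_subset_comp_left h
  rw [fComp, mem_lift_sets hmono]
  exact exists_congr fun _ =>
    and_congr_right' (mem_lift'_sets fun _ _ h => comp_subset_comp_right h)

lemma fComp_mono {F F' G G' : Filter (α × α)} (hF : F ≤ F') (hG : G ≤ G') :
    fComp F G ≤ fComp F' G' := fun _ hs => by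
  obtain ⟨U, hU, V, hV, h⟩ := mem_fComp.1 hs
  exact mem_fComp.2 ⟨U, hF hU, V, hG hV, h⟩

lemma fComp_assoc (F G H : Filter (α × α)) :
    fComp (fComp F G) H = fComp F (fComp G H) := by
  ext s
  rw [mem_fComp, mem_fComp]
  constructor
  · rintro ⟨UV, hUV, W, hW, h⟩
    obtain ⟨U, hU, V, hV, hUV⟩ := mem_fComp.1 hUV
    refine ⟨U, hU, V ○ W, mem_fComp.2 ⟨V, hV, W, hW, subset_rfl⟩, ?_⟩
    rw [← comp_assoc]
    exact (comp_subset_comp_left hUV).trans h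
  · rintro ⟨U, hU, VW, hVW, h⟩
    obtain ⟨V, hV, W, hW, hVW⟩ := mem_fComp.1 hVW
    refine ⟨U ○ V, mem_fComp.2 ⟨U, hU, V, hV, subset_rfl⟩, W, hW, ?_⟩
    rw [comp_assoc]
    exact (comp_subset_comp_right hVW).trans h

lemma le_fComp_principal_id (F : Filter (α × α)) : F ≤ fComp F (𝓟 SetRel.id) := fun _ hs => by
  obtain ⟨U, hU, V, hV, h⟩ := mem_fComp.1 hs
  refine mem_of_superset hU (subset_trans ?_ h)
  simpa only [comp_id] using comp_subset_comp_right (R := U) (mem_principal.1 hV)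

lemma le_principal_id_fComp (F : Filter (α × α)) : F ≤ fComp (𝓟 SetRel.id) F := fun _ hs => by
  obtain ⟨U, hU, V, hV, h⟩ := mem_fComp.1 hs
  refine mem_of_superset hV (subset_trans ?_ h)
  simpa only [id_comp] using comp_subset_comp_left (S := V) (mem_principal.1 hU)

lemma le_fComp_inf_fComp_swap {F G H : Filter (α × α)} (h : H ≤ fComp F G) :
    H ≤ fComp F (G ⊓ fComp (map Prod.swap F) H) := fun s hs => by
  obtain ⟨U, hU, V, hV, hUV⟩ := mem_fComp.1 hs
  obtain ⟨S, hS, C, hC, rfl⟩ := mem_inf_iff.1 hV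
  obtain ⟨W, hW, T, hT, hWT⟩ := mem_fComp.1 hC
  have hmem : ((U ∩ Prod.swap ⁻¹' W) ○ S) ∩ T ∈ H :=
    inter_mem (h (mem_fComp.2 ⟨_, inter_mem hU (mem_map.1 hW), S, hS, subset_rfl⟩)) hT
  refine mem_of_superset hmem ?_
  rintro ⟨a, b⟩ ⟨⟨c, ⟨hac, hca⟩, hcb⟩, hab⟩
  exact hUV ⟨c, hac, hcb, hWT ⟨a, hca, hab⟩⟩

section Ideals

variable {x y z ℰ ℰ' I X : Set (Filter (α × α))}

lemma IsFilIdeal.bot_mem (hI : IsFilIdeal I) : ⊥ ∈ I :=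
  hI.1.elim fun F hF => hI.2.1 F hF ⊥ bot_le

lemma IsSuperUnif.inter (hy : IsSuperUnif y) (hz : IsSuperUnif z) : IsSuperUnif (y ∩ z) :=
  ⟨⟨⟨_, hy.2.1, hz.2.1⟩,
    fun F hF G hG => ⟨hy.1.2.1 F hF.1 G hG, hz.1.2.1 F hF.2 G hG⟩,
    fun F hF G hG => ⟨hy.1.2.2 F hF.1 G hG.1, hz.1.2.2 F hF.2 G hG.2⟩⟩,
   ⟨hy.2.1, hz.2.1⟩,
   fun F hF => ⟨hy.2.2.1 F hF.1, hz.2.2.1 F hF.2⟩,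
   fun F hF G hG => ⟨hy.2.2.2 F hF.1 G hG.1, hz.2.2.2 F hF.2 G hG.2⟩⟩

lemma filIdealGen_subset (hI : IsFilIdeal I) (hX : X ⊆ I) : filIdealGen X ⊆ I := by
  rintro H ⟨s, hs, hH⟩
  exact hI.2.1 _ (Finset.sup_induction hI.bot_mem hI.2.2 fun F hF => hX (hs hF)) H hH

lemma filComps_subset (hX : X ⊆ I) (hI : ∀ F ∈ I, ∀ G ∈ I, fComp F G ∈ I) :
    filComps X ⊆ I := by
  rintro H ⟨l, hl, hlX, rfl⟩
  induction l with
  | nil => exact absurd rfl hl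
  | cons F l ih =>
    cases l with
    | nil => exact hX (hlX F (List.mem_singleton_self F))
    | cons G l =>
      exact hI F (hX (hlX F List.mem_cons_self)) _
        (ih (List.cons_ne_nil _ _) fun F' hF' => hlX F' (List.mem_cons_of_mem _ hF'))

lemma IsFilIdeal.filIdealComp (hE : IsFilIdeal ℰ) (hE' : IsFilIdeal ℰ') :
    IsFilIdeal (filIdealComp ℰ ℰ') := by
  obtain ⟨⟨F, hF⟩, -, hEsup⟩ := hE
  obtain ⟨⟨G, hG⟩, -, hE'sup⟩ := hE'
  refine ⟨⟨_, F, hF, G, hG, le_rfl⟩,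
    fun H ⟨F, hF, G, hG, hH⟩ H' hH' => ⟨F, hF, G, hG, hH'.trans hH⟩, ?_⟩
  rintro H₁ ⟨F₁, hF₁, G₁, hG₁, h₁⟩ H₂ ⟨F₂, hF₂, G₂, hG₂, h₂⟩
  exact ⟨_, hEsup _ hF₁ _ hF₂, _, hE'sup _ hG₁ _ hG₂,
    sup_le (h₁.trans (fComp_mono le_sup_left le_sup_left))
      (h₂.trans (fComp_mono le_sup_right le_sup_right))⟩

lemma fComp_mem_filIdealComp (hE : IsSuperUnif ℰ) (hE' : IsSuperUnif ℰ')
    (hperm : filIdealComp ℰ' ℰ ⊆ filIdealComp ℰ ℰ') {H₁ H₂ : Filter (α × α)}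
    (h₁ : H₁ ∈ filIdealComp ℰ ℰ') (h₂ : H₂ ∈ filIdealComp ℰ ℰ') :
    fComp H₁ H₂ ∈ filIdealComp ℰ ℰ' := by
  obtain ⟨F₁, hF₁, G₁, hG₁, h₁⟩ := h₁
  obtain ⟨F₂, hF₂, G₂, hG₂, h₂⟩ := h₂
  obtain ⟨F, hF, G, hG, hGF⟩ := hperm ⟨G₁, hG₁, F₂, hF₂, le_rfl⟩
  refine ⟨_, hE.2.2.2 _ hF₁ _ hF, _, hE'.2.2.2 _ hG _ hG₂, ?_⟩
  calc fComp H₁ H₂ ≤ fComp (fComp F₁ G₁) (fComp F₂ G₂) := fComp_mono h₁ h₂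
    _ = fComp F₁ (fComp (fComp G₁ F₂) G₂) := by simp only [fComp_assoc]
    _ ≤ fComp F₁ (fComp (fComp F G) G₂) := fComp_mono le_rfl (fComp_mono hGF le_rfl)
    _ = fComp (fComp F₁ F) (fComp G G₂) := by simp only [fComp_assoc]

lemma filIdealComp_subset_suJoin : filIdealComp ℰ ℰ' ⊆ suJoin ℰ ℰ' := by
  rintro H ⟨F, hF, G, hG, hH⟩
  refine ⟨{fComp F G}, ?_, by simpa using hH⟩
  rw [Finset.coe_singleton, singleton_subset_iff]
  refine ⟨[F, G], List.cons_ne_nil _ _, ?_, rfl⟩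
  rintro P (_ | ⟨_, _ | ⟨_, ⟨⟩⟩⟩)
  exacts [Or.inl hF, Or.inr hG]

lemma suJoin_eq_filIdealComp (hE : IsSuperUnif ℰ) (hE' : IsSuperUnif ℰ')
    (hperm : filIdealComp ℰ' ℰ ⊆ filIdealComp ℰ ℰ') : suJoin ℰ ℰ' = filIdealComp ℰ ℰ' := by
  refine (filIdealGen_subset (hE.1.filIdealComp hE'.1) (filComps_subset ?_
    fun _ h₁ _ h₂ => fComp_mem_filIdealComp hE hE' hperm h₁ h₂)).antisymm
    filIdealComp_subset_suJoin
  rintro F (hF | hF)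
  exacts [⟨F, hF, _, hE'.2.1, le_fComp_principal_id F⟩, ⟨_, hE.2.1, F, hF, le_principal_id_fComp F⟩]

lemma filIdealComp_inter_eq_of_subset (hy : IsFilIdeal y) (hz : IsSuperUnif z) (hxz : x ⊆ z) :
    filIdealComp x (y ∩ z) = filIdealComp x y ∩ z := by
  ext H
  constructor
  · rintro ⟨F, hF, G, ⟨hGy, hGz⟩, hH⟩
    exact ⟨⟨F, hF, G, hGy, hH⟩, hz.1.2.1 _ (hz.2.2.2 F (hxz hF) G hGz) H hH⟩
  · rintro ⟨⟨F, hF, G, hGy, hH⟩, hHz⟩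
    have hFH : fComp (map Prod.swap F) H ∈ z := hz.2.2.2 _ (hz.2.2.1 F (hxz hF)) H hHz
    exact ⟨F, hF, _, ⟨hy.2.1 G hGy _ inf_le_left, hz.1.2.1 _ hFH _ inf_le_right⟩,
      le_fComp_inf_fComp_swap hH⟩

end Ideals

section Operations

variable {n : ℕ}

lemma mem_opFilter {w : (Fin n → A) → A} {F : Fin n → Filter (A × A)} {U : Set (A × A)} :
    U ∈ opFilter w F ↔ ∃ S : Fin n → Set (A × A), (∀ k, S k ∈ F k) ∧ opImg w S ⊆ U := by
  refine ⟨fun hU => ?_, fun ⟨S, hS, hSU⟩ => mem_of_superset (mem_generate_of_mem ⟨S, hS, rfl⟩) hSU⟩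
  obtain ⟨ts, hts, htsfin, htsU⟩ := mem_generate_iff.1 hU
  choose! S hS hST using fun T (hT : T ∈ ts) => hts hT
  refine ⟨fun k => ⋂ T ∈ ts, S T k, fun k => (biInter_mem htsfin).2 fun T hT => hS T hT k,
    subset_trans ?_ htsU⟩
  rintro p ⟨a, b, hab, rfl⟩ T hT
  rw [hST T hT]
  exact ⟨a, b, fun k => mem_iInter₂.1 (hab k) T hT, rfl⟩

lemma apply_mem_of_opImg_subset {w : (Fin n → A) → A} {S : Fin n → Set (A × A)} {U : Set (A × A)}
    (hU : opImg w S ⊆ U) {a b : Fin n → A} (hab : ∀ k, (a k, b k) ∈ S k) : (w a, w b) ∈ U :=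
  hU ⟨a, b, hab, rfl⟩

lemma opFilter_proj_le (F : Fin n → Filter (A × A)) (k : Fin n) :
    opFilter (fun v => v k) F ≤ F k := by
  classical
  intro U hU
  refine mem_opFilter.2 ⟨Function.update (fun _ => univ) k U, fun j => ?_, ?_⟩
  · rcases eq_or_ne j k with rfl | hj
    · simpa using hU
    · simp [hj]
  · rintro p ⟨a, b, hab, rfl⟩
    simpa using hab k

lemma opFilter_comp_le {m : ℕ} (w : (Fin m → A) → A) (u : Fin m → (Fin n → A) → A)
    (F : Fin n → Filter (A × A)) :
    opFilter (fun v => w fun j => u j v) F ≤ opFilter w fun j => opFilter (u j) F := by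
  intro U hU
  obtain ⟨S, hS, hSU⟩ := mem_opFilter.1 hU
  choose R hR hRS using fun j => mem_opFilter.1 (hS j)
  refine mem_opFilter.2 ⟨fun k => ⋂ j, R j k, fun k => iInter_mem.2 fun j => hR j k, ?_⟩
  rintro p ⟨a, b, hab, rfl⟩
  exact hSU ⟨_, _, fun j => hRS j ⟨a, b, fun k => mem_iInter.1 (hab k) j, rfl⟩, rfl⟩

lemma suCompatible.inter {ops : ∀ i, (Fin (ar i) → A) → A} {y z : Set (Filter (A × A))}
    (hy : suCompatible ops y) (hz : suCompatible ops z) : suCompatible ops (y ∩ z) :=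
  fun i F hF => ⟨hy i F fun k => (hF k).1, hz i F fun k => (hF k).2⟩

lemma opFilter_eval_mem (ops : ∀ i, (Fin (ar i) → A) → A) {ℰ : Set (Filter (A × A))}
    (hE : IsFilIdeal ℰ) (hC : suCompatible ops ℰ) (s : Term ι ar n)
    {F : Fin n → Filter (A × A)} (hF : ∀ k, F k ∈ ℰ) :
    opFilter (fun v => s.eval ops v) F ∈ ℰ := by
  induction s with
  | var k => exact hE.2.1 _ (hF k) _ (opFilter_proj_le F k)
  | app i ts ih => exact hE.2.1 _ (hC i _ ih) _ (opFilter_comp_le (ops i) _ F)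

end Operations

lemma fComp_le_of_maltsev {m : (Fin 3 → A) → A} (hm₁ : ∀ x y, m ![x, x, y] = y)
    (hm₂ : ∀ x y, m ![x, y, y] = x) (F G : Filter (A × A)) :
    fComp F G ≤ fComp (opFilter m ![𝓟 SetRel.id, 𝓟 SetRel.id, G])
      (opFilter m ![𝓟 SetRel.id, map Prod.swap F, 𝓟 SetRel.id]) := fun s hs => by
  obtain ⟨U, hU, V, hV, hUV⟩ := mem_fComp.1 hs
  obtain ⟨S, hS, hSU⟩ := mem_opFilter.1 hU
  obtain ⟨T, hT, hTV⟩ := mem_opFilter.1 hV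
  refine mem_fComp.2 ⟨Prod.swap ⁻¹' T 1, hT 1, S 2, hS 2, ?_⟩
  rintro ⟨x, z⟩ ⟨y, hyx, hyz⟩
  refine hUV ⟨m ![x, y, z], ?_, ?_⟩
  · have h := apply_mem_of_opImg_subset hSU (a := ![x, y, y]) (b := ![x, y, z]) fun k => by
      fin_cases k
      exacts [mem_principal.1 (hS 0) (by simp), mem_principal.1 (hS 1) (by simp), hyz]
    rwa [hm₂] at h
  · have h := apply_mem_of_opImg_subset hTV (a := ![x, y, z]) (b := ![x, x, z]) fun k => by
      fin_cases k
      exacts [mem_principal.1 (hT 0) (by simp), hyx, mem_principal.1 (hT 2) (by simp)]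
    rwa [hm₁] at h

lemma filIdealComp_subset_comm (ops : ∀ i, (Fin (ar i) → A) → A) (t : Term ι ar 3)
    (ht1 : ∀ x y : A, t.eval ops ![x, x, y] = y) (ht2 : ∀ x y : A, t.eval ops ![x, y, y] = x)
    {ℰ ℰ' : Set (Filter (A × A))} (hE : IsSuperUnif ℰ) (hCE : suCompatible ops ℰ)
    (hE' : IsSuperUnif ℰ') (hCE' : suCompatible ops ℰ') :
    filIdealComp ℰ ℰ' ⊆ filIdealComp ℰ' ℰ := by
  rintro H ⟨F, hF, G, hG, hH⟩
  refine ⟨_, opFilter_eval_mem ops hE'.1 hCE' t ?_, _, opFilter_eval_mem ops hE.1 hCE t ?_,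
    hH.trans (fComp_le_of_maltsev ht1 ht2 F G)⟩
  all_goals intro k; fin_cases k
  exacts [hE'.2.1, hE'.2.1, hG, hE.2.1, hE.2.2.1 F hF, hE.2.1]

lemma filIdealComp_comm (ops : ∀ i, (Fin (ar i) → A) → A) (t : Term ι ar 3)
    (ht1 : ∀ x y : A, t.eval ops ![x, x, y] = y) (ht2 : ∀ x y : A, t.eval ops ![x, y, y] = x)
    {ℰ ℰ' : Set (Filter (A × A))} (hE : IsSuperUnif ℰ) (hCE : suCompatible ops ℰ)
    (hE' : IsSuperUnif ℰ') (hCE' : suCompatible ops ℰ') :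
    filIdealComp ℰ ℰ' = filIdealComp ℰ' ℰ :=
  (filIdealComp_subset_comm ops t ht1 ht2 hE hCE hE' hCE').antisymm
    (filIdealComp_subset_comm ops t ht1 ht2 hE' hCE' hE hCE)

theorem stmt17 (ops : ∀ i, (Fin (ar i) → A) → A) (t : Term ι ar 3)
    (ht1 : ∀ x y : A, t.eval ops ![x, x, y] = y)
    (ht2 : ∀ x y : A, t.eval ops ![x, y, y] = x) :
    (∀ ℰ ℰ' : Set (Filter (A × A)), IsSuperUnif ℰ → suCompatible ops ℰ →
      IsSuperUnif ℰ' → suCompatible ops ℰ' →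
      filIdealComp ℰ ℰ' = filIdealComp ℰ' ℰ) ∧
    (∀ x y z : Set (Filter (A × A)),
      IsSuperUnif x → suCompatible ops x →
      IsSuperUnif y → suCompatible ops y →
      IsSuperUnif z → suCompatible ops z →
      x ⊆ z → suJoin x (y ∩ z) = suJoin x y ∩ z) := by
  refine ⟨fun _ _ => filIdealComp_comm ops t ht1 ht2, fun x y z hx hCx hy hCy hz hCz hxz => ?_⟩
  have hyz := hy.inter hz
  rw [suJoin_eq_filIdealComp hx hyz (filIdealComp_comm ops t ht1 ht2 hyz (hCy.inter hCz) hx hCx).le,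
    suJoin_eq_filIdealComp hx hy (filIdealComp_comm ops t ht1 ht2 hy hCy hx hCx).le,
    filIdealComp_inter_eq_of_subset hy.1 hz hxz]
end
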